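/- arXiv:1407.8086 — 2 statements merged into one kernel-verified Lean document; each statement's English description precedes it below -/
import Mathlib

section
/- Suppose s ≥ 2 is an integer and p ≥ 3 is an odd prime. Then there exist positive integers s' and d' with d' ≤ p such that for all positive integers n: ν_p(f_n(s,-1)) = 0 if d' ∤ n, and ν_p(f_n(s,-1)) = ν_p(s'·n/d') if d' | n. -/
/-!
Let `d` be the least positive index with `p ∣ f_d`. By the addition formula and Cassini's
identity `f_{m+1}² - f_{m+2} f_m = 1`, divisibility of `f_n` by `p` is `d`-periodic in `n`,
so `p ∣ f_n ↔ d ∣ n`. That `d ≤ p` comes from Frobenius: if `p ∤ s² - 4`, the roots `α ≠ β`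
of `X² - sX + 1` in an algebraic closure of `𝔽_p` are permuted by `x ↦ x^p`, so
`α^(p∓1) = 1` and hence `(α - β) f_{(p∓1)/2} = α^{(p∓1)/2} - β^{(p∓1)/2} = 0`; if
`p ∣ s ∓ 2`, then `f_p ≡ ±p`.

For `n = dk`, `f_{dk}(s) = f_d(s) · f_k(V_d)` with `V_d = α^d + β^d`, and
`V_d² - 4 = (s² - 4) f_d²` forces `V_d ≡ ±2 mod p²`. For a parameter `t ≡ 2 mod p²`,
`f_k(t) ≡ k mod p` and `f_{pk}(t) = f_k(t) f_p(V_k(t))` with `f_p(V_k(t)) ≡ p mod p²`, so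
`ν_p(f_k(t)) = ν_p(k)`. Hence `ν_p(f_{dk}) = ν_p(f_d) + ν_p(k)`, i.e. `s' = p ^ ν_p(f_d)`.
-/

/-- Generalized Fibonacci sequence: f 0 = 0, f 1 = 1, f (n+2) = s * f (n+1) + t * f n. -/
def genFib (s t : ℤ) : ℕ → ℤ
  | 0 => 0
  | 1 => 1
  | n + 2 => s * genFib s t (n + 1) + t * genFib s t n

-- `lucasV s n = α ^ n + β ^ n` for the roots `α, β` of `X² - sX + 1`.
def lucasV (s : ℤ) (n : ℕ) : ℤ := 2 * genFib s (-1) (n + 1) - s * genFib s (-1) n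

section Identities

variable (s : ℤ)

theorem genFib_add_two (n : ℕ) :
    genFib s (-1) (n + 2) = s * genFib s (-1) (n + 1) - genFib s (-1) n := by
  rw [genFib]; ring

theorem lucasV_zero : lucasV s 0 = 2 := by simp [lucasV, genFib]

theorem lucasV_one : lucasV s 1 = s := by simp [lucasV, genFib]; ring

theorem lucasV_add_two (n : ℕ) : lucasV s (n + 2) = s * lucasV s (n + 1) - lucasV s n := by
  simp only [lucasV, genFib_add_two]; ring

theorem genFib_sq_sub_mul (n : ℕ) :
    genFib s (-1) (n + 1) ^ 2 - genFib s (-1) (n + 2) * genFib s (-1) n = 1 := by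
  induction n with
  | zero => simp [genFib]
  | succ n ih =>
    rw [genFib_add_two s (n + 1), genFib_add_two s n] at *
    linear_combination ih

theorem lucasV_sq_sub_four (n : ℕ) :
    lucasV s n ^ 2 - 4 = (s ^ 2 - 4) * genFib s (-1) n ^ 2 := by
  have := genFib_sq_sub_mul s n
  rw [genFib_add_two] at this
  simp only [lucasV]
  linear_combination 4 * this

theorem genFib_add_add_one (m n : ℕ) :
    genFib s (-1) (m + n + 1) =
      genFib s (-1) (m + 1) * genFib s (-1) (n + 1) - genFib s (-1) m * genFib s (-1) n := by
  induction m using Nat.twoStepInduction with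
  | zero => simp [genFib]
  | one => rw [add_comm 1 n, genFib_add_two]; simp [genFib]
  | more m ih₀ ih₁ =>
    have r₁ := genFib_add_two s (m + n + 1)
    have r₂ := genFib_add_two s (m + 1)
    have r₃ := genFib_add_two s m
    ring_nf at r₁ r₂ r₃ ih₀ ih₁ ⊢
    linear_combination r₁ + s * ih₁ - ih₀ - genFib s (-1) (1 + n) * r₂ + genFib s (-1) n * r₃

theorem genFib_add_two_mul (m n : ℕ) :
    genFib s (-1) (n + 2 * m) + genFib s (-1) n = lucasV s m * genFib s (-1) (n + m) := by
  induction m using Nat.twoStepInduction generalizing n with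
  | zero => simp [lucasV_zero]; ring
  | one => rw [lucasV_one, genFib_add_two]; ring
  | more m ih₀ ih₁ =>
    have h₀ := ih₀ (n + 2)
    have h₁ := ih₁ (n + 1)
    have r₁ := genFib_add_two s (n + 2 * m + 2)
    have r₂ := genFib_add_two s n
    rw [lucasV_add_two]
    ring_nf at h₀ h₁ r₁ r₂ ⊢
    linear_combination r₁ + s * h₁ - h₀ + r₂

theorem genFib_mul (m k : ℕ) :
    genFib s (-1) (m * k) = genFib s (-1) m * genFib (lucasV s m) (-1) k := by
  induction k using Nat.twoStepInduction with
  | zero => simp [genFib]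
  | one => simp [genFib]
  | more k ih₀ ih₁ =>
    have h := genFib_add_two_mul s m (m * k)
    rw [show m * k + 2 * m = m * (k + 2) by ring, show m * k + m = m * (k + 1) by ring,
      ih₀, ih₁] at h
    rw [genFib_add_two]
    linear_combination h

theorem genFib_neg (n : ℕ) : genFib (-s) (-1) n = (-1) ^ (n + 1) * genFib s (-1) n := by
  induction n using Nat.twoStepInduction with
  | zero => simp [genFib]
  | one => simp [genFib]
  | more n ih₀ ih₁ => rw [genFib_add_two, genFib_add_two, ih₀, ih₁]; ring

theorem natAbs_genFib_neg (n : ℕ) : (genFib (-s) (-1) n).natAbs = (genFib s (-1) n).natAbs := by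
  simp [genFib_neg, Int.natAbs_mul]

theorem sub_two_dvd_genFib_sub (n : ℕ) : s - 2 ∣ genFib s (-1) n - n := by
  induction n using Nat.twoStepInduction with
  | zero => simp [genFib]
  | one => simp [genFib]
  | more n ih₀ ih₁ =>
    have h : genFib s (-1) (n + 2) - ↑(n + 2) =
        (s - 2) * genFib s (-1) (n + 1) + 2 * (genFib s (-1) (n + 1) - ↑(n + 1)) -
          (genFib s (-1) n - n) := by
      rw [genFib_add_two]; push_cast; ring
    rw [h]
    exact ((dvd_mul_right _ _).add (ih₁.mul_left 2)).sub ih₀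

theorem sub_two_dvd_lucasV_sub (n : ℕ) : s - 2 ∣ lucasV s n - 2 := by
  have h : lucasV s n - 2 = 2 * (genFib s (-1) (n + 1) - ↑(n + 1)) -
      s * (genFib s (-1) n - n) - (s - 2) * n := by
    simp only [lucasV]; push_cast; ring
  rw [h]
  exact (((sub_two_dvd_genFib_sub s _).mul_left 2).sub
    ((sub_two_dvd_genFib_sub s n).mul_left s)).sub (dvd_mul_right _ _)

theorem strictMono_abs_genFib (hs : 2 ≤ |s|) : StrictMono fun n ↦ |genFib s (-1) n| := by
  refine strictMono_nat_of_lt_succ fun n ↦ ?_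
  induction n with
  | zero => simp [genFib]
  | succ n ih =>
    have h : |s| * |genFib s (-1) (n + 1)| - |genFib s (-1) n| ≤ |genFib s (-1) (n + 2)| := by
      rw [genFib_add_two, ← abs_mul]; exact abs_sub_abs_le_abs_sub _ _
    nlinarith [abs_nonneg (genFib s (-1) (n + 1))]

theorem genFib_ne_zero (hs : 2 ≤ |s|) {n : ℕ} (hn : n ≠ 0) : genFib s (-1) n ≠ 0 := by
  simpa [genFib] using strictMono_abs_genFib s hs (Nat.pos_of_ne_zero hn)

theorem sub_mul_genFib {R : Type*} [CommRing R] {α β : R} (hαβ : α * β = 1)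
    (hs : (s : R) = α + β) (n : ℕ) : (α - β) * genFib s (-1) n = α ^ n - β ^ n := by
  induction n using Nat.twoStepInduction with
  | zero => simp [genFib]
  | one => simp [genFib]
  | more n ih₀ ih₁ =>
    rw [genFib_add_two]; push_cast; rw [hs]
    linear_combination (α + β) * ih₁ - ih₀ + (α ^ n - β ^ n) * hαβ

end Identities

theorem pow_sub_one_eq_one_or_pow_add_one_eq_one {K : Type*} [Field K] (p : ℕ) [Fact p.Prime]
    [CharP K p] {α β : K} (hαβ : α * β = 1) (hfix : (α + β) ^ p = α + β) :
    α ^ (p - 1) = 1 ∨ α ^ (p + 1) = 1 := by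
  have hroot : (α ^ p - α) * (α ^ p - β) = 0 := by
    have hpow : (α * β) ^ p = 1 := by rw [hαβ, one_pow]
    rw [add_pow_char] at hfix
    linear_combination α ^ p * hfix - hpow + hαβ
  rcases mul_eq_zero.1 hroot with h | h
  · left
    refine mul_left_cancel₀ (left_ne_zero_of_mul_eq_one hαβ) ?_
    rw [mul_pow_sub_one (Fact.out : p.Prime).ne_zero, mul_one, sub_eq_zero.1 h]
  · right
    rw [pow_succ, sub_eq_zero.1 h, mul_comm, hαβ]

theorem exists_genFib_cast_eq_zero {K : Type*} [Field K] (p : ℕ) [Fact p.Prime] [CharP K p]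
    (hp2 : p ≠ 2) (s : ℤ) {α β : K} (hαβ : α * β = 1) (hs : (s : K) = α + β) (hne : α ≠ β) :
    ∃ m, 0 < m ∧ m ≤ p ∧ (genFib s (-1) m : K) = 0 := by
  have hp := (Fact.out : p.Prime)
  obtain ⟨k, hk⟩ := hp.odd_of_ne_two hp2
  have hsp : (s : K) ^ p = s := by
    have := congrArg (ZMod.castHom (dvd_refl p) K) (ZMod.pow_card (s : ZMod p))
    rwa [map_pow, map_intCast] at this
  suffices ∃ m, 0 < m ∧ m ≤ p ∧ α ^ (2 * m) = 1 by
    obtain ⟨m, hm0, hmp, hm⟩ := this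
    have hβ : β ^ m = α ^ m := by
      have hpow : (α * β) ^ m = 1 := by rw [hαβ, one_pow]
      linear_combination -β ^ m * hm + α ^ m * hpow
    have := sub_mul_genFib s hαβ hs m
    rw [hβ, sub_self] at this
    exact ⟨m, hm0, hmp, (mul_eq_zero.1 this).resolve_left (sub_ne_zero.2 hne)⟩
  have := hp.two_le
  rcases pow_sub_one_eq_one_or_pow_add_one_eq_one p hαβ (hs ▸ hsp) with h | h
  · exact ⟨k, by omega, by omega, by rwa [show 2 * k = p - 1 by omega]⟩
  · exact ⟨k + 1, by omega, by omega, by rwa [show 2 * (k + 1) = p + 1 by omega]⟩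

theorem dvd_genFib_iff_of_dvd_sub_two {a s : ℤ} (h : a ∣ s - 2) (n : ℕ) :
    a ∣ genFib s (-1) n ↔ a ∣ n :=
  dvd_iff_dvd_of_dvd_sub (h.trans (sub_two_dvd_genFib_sub s n))

theorem exists_dvd_genFib (p : ℕ) [Fact p.Prime] (hp2 : p ≠ 2) (s : ℤ) :
    ∃ m, 0 < m ∧ m ≤ p ∧ (p : ℤ) ∣ genFib s (-1) m := by
  have hp := (Fact.out : p.Prime)
  by_cases hD : (p : ℤ) ∣ (s - 2) * (s + 2)
  · refine ⟨p, hp.pos, le_rfl, ?_⟩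
    rcases (Nat.prime_iff_prime_int.1 hp).dvd_or_dvd hD with h | h
    · exact (dvd_genFib_iff_of_dvd_sub_two h p).2 dvd_rfl
    · have h' : (p : ℤ) ∣ -s - 2 := by rw [show -s - 2 = -(s + 2) by ring]; exact h.neg_right
      rw [Int.natCast_dvd, ← natAbs_genFib_neg, ← Int.natCast_dvd]
      exact (dvd_genFib_iff_of_dvd_sub_two h' p).2 dvd_rfl
  · -- an opaque field rather than a `let`, so that `push_cast` and `field_simp` apply
    obtain ⟨K, _, _, _⟩ : ∃ (K : Type) (_ : Field K) (_ : IsAlgClosed K), CharP K p :=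
      ⟨AlgebraicClosure (ZMod p), inferInstance, inferInstance, inferInstance⟩
    obtain ⟨δ, hδ⟩ := IsAlgClosed.exists_eq_mul_self ((s : K) ^ 2 - 4)
    have h2 : (2 : K) ≠ 0 := Ring.two_ne_zero (by rwa [ringChar.eq K p])
    have hδ0 : δ ≠ 0 := by
      rintro rfl
      apply hD
      rw [← CharP.intCast_eq_zero_iff K p]
      push_cast
      linear_combination hδ
    have hsub : (s + δ) / 2 - (s - δ) / 2 = δ := by field_simp; ring
    obtain ⟨m, hm0, hmp, hm⟩ := exists_genFib_cast_eq_zero (K := K) p hp2 s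
      (α := (s + δ) / 2) (β := (s - δ) / 2) (by field_simp; linear_combination hδ)
      (by field_simp; ring) (sub_ne_zero.1 (by rwa [hsub]))
    exact ⟨m, hm0, hmp, (CharP.intCast_eq_zero_iff K p _).1 hm⟩

theorem dvd_genFib_add_iff {p : ℕ} (hp : p.Prime) {s : ℤ} {m : ℕ}
    (hm : (p : ℤ) ∣ genFib s (-1) m) (n : ℕ) :
    (p : ℤ) ∣ genFib s (-1) (m + n) ↔ (p : ℤ) ∣ genFib s (-1) n := by
  cases n with
  | zero => simpa [genFib] using hm
  | succ n =>
    have hpZ := Nat.prime_iff_prime_int.1 hp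
    have hcop : ¬ (p : ℤ) ∣ genFib s (-1) (m + 1) := fun h ↦ hpZ.not_dvd_one <| by
      rw [← genFib_sq_sub_mul s m]
      exact (dvd_pow h two_ne_zero).sub (hm.mul_left _)
    rw [← add_assoc, genFib_add_add_one, dvd_sub_left (hm.mul_right _), hpZ.dvd_mul,
      or_iff_right hcop]

noncomputable def rankOfApparition (s : ℤ) (p : ℕ) : ℕ :=
  sInf {n | 0 < n ∧ (p : ℤ) ∣ genFib s (-1) n}

theorem rankOfApparition_spec (p : ℕ) [Fact p.Prime] (hp2 : p ≠ 2) (s : ℤ) :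
    0 < rankOfApparition s p ∧ rankOfApparition s p ≤ p ∧
      ∀ n, (p : ℤ) ∣ genFib s (-1) n ↔ rankOfApparition s p ∣ n := by
  have hp := (Fact.out : p.Prime)
  obtain ⟨m, hm0, hmp, hm⟩ := exists_dvd_genFib p hp2 s
  have hmem : m ∈ {n | 0 < n ∧ (p : ℤ) ∣ genFib s (-1) n} := ⟨hm0, hm⟩
  obtain ⟨hd0, hd⟩ := Nat.sInf_mem ⟨m, hmem⟩
  set d := rankOfApparition s p
  have hperiodic : Function.Periodic (fun n ↦ (p : ℤ) ∣ genFib s (-1) n) d := fun n ↦ by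
    rw [add_comm]; exact propext (dvd_genFib_add_iff hp hd n)
  refine ⟨hd0, (Nat.sInf_le hmem).trans hmp, fun n ↦ ?_⟩
  rw [← hperiodic.map_mod_nat, Nat.dvd_iff_mod_eq_zero]
  refine ⟨fun h ↦ by_contra fun hr ↦ ?_, fun h ↦ by simp [h, genFib]⟩
  exact Nat.notMem_of_lt_sInf (Nat.mod_lt n hd0) (Set.mem_ofPred.2 ⟨Nat.pos_of_ne_zero hr, h⟩)

section Valuation

variable (p : ℕ) [Fact p.Prime] {t : ℤ}

theorem two_le_abs_of_sq_dvd_sub_two (h : (p : ℤ) ^ 2 ∣ t - 2) : 2 ≤ |t| := by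
  have hp := (Fact.out : p.Prime).two_le
  by_contra! ht
  obtain ⟨ht₁, ht₂⟩ := abs_lt.1 ht
  have := Int.le_of_dvd (by omega) (dvd_neg.2 h)
  have : (4 : ℤ) ≤ (p : ℤ) ^ 2 := by nlinarith
  omega

theorem padicValInt_genFib_self_of_sq_dvd_sub_two (h : (p : ℤ) ^ 2 ∣ t - 2) :
    padicValInt p (genFib t (-1) p) = 1 := by
  have hp := (Fact.out : p.Prime)
  obtain ⟨c, hc⟩ := h.trans (sub_two_dvd_genFib_sub t p)
  have hunit : ¬ (p : ℤ) ∣ 1 + p * c := by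
    rw [dvd_add_left (dvd_mul_right _ c)]
    exact_mod_cast hp.not_dvd_one
  rw [show genFib t (-1) p = p * (1 + p * c) by linear_combination hc,
    padicValInt.mul (by exact_mod_cast hp.ne_zero) (fun h ↦ hunit (by simp [h])),
    padicValInt.self hp.one_lt, padicValInt.eq_zero_of_not_dvd hunit]

theorem padicValInt_genFib_of_sq_dvd_sub_two (h : (p : ℤ) ^ 2 ∣ t - 2) {k : ℕ} (hk : k ≠ 0) :
    padicValInt p (genFib t (-1) k) = padicValNat p k := by
  have hp := (Fact.out : p.Prime)
  induction k using Nat.strong_induction_on generalizing t with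
  | _ k ih =>
  by_cases hpk : p ∣ k
  · obtain ⟨k, rfl⟩ := hpk
    have hk' : k ≠ 0 := right_ne_zero_of_mul hk
    have hV : (p : ℤ) ^ 2 ∣ lucasV t k - 2 := h.trans (sub_two_dvd_lucasV_sub t k)
    have hprod := genFib_ne_zero t (two_le_abs_of_sq_dvd_sub_two p h) hk
    rw [mul_comm, genFib_mul] at hprod ⊢
    rw [padicValInt.mul (left_ne_zero_of_mul hprod) (right_ne_zero_of_mul hprod),
      ih k (by nlinarith [hp.two_le, Nat.pos_of_ne_zero hk']) h hk',
      padicValInt_genFib_self_of_sq_dvd_sub_two p hV, mul_comm,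
      padicValNat.mul hp.ne_zero hk', padicValNat.self hp.one_lt, add_comm]
  · have hpt : (p : ℤ) ∣ t - 2 := (dvd_pow_self _ two_ne_zero).trans h
    rw [padicValNat.eq_zero_of_not_dvd hpk, padicValInt.eq_zero_of_not_dvd]
    rwa [dvd_genFib_iff_of_dvd_sub_two hpt, Int.natCast_dvd_natCast]

theorem padicValInt_genFib_of_sq_dvd_sq_sub_four (hp2 : p ≠ 2) (h : (p : ℤ) ^ 2 ∣ t ^ 2 - 4)
    {k : ℕ} (hk : k ≠ 0) : padicValInt p (genFib t (-1) k) = padicValNat p k := by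
  have hp := (Fact.out : p.Prime)
  have hpZ := Nat.prime_iff_prime_int.1 hp
  rw [show t ^ 2 - 4 = (t - 2) * (t + 2) by ring] at h
  by_cases hplus : (p : ℤ) ∣ t + 2
  · have hminus : ¬ (p : ℤ) ∣ t - 2 := fun hminus ↦ hp2 <| by
      have h4 : (p : ℤ) ∣ 2 ^ 2 := by
        rw [show (2 : ℤ) ^ 2 = t + 2 - (t - 2) by ring]; exact hplus.sub hminus
      exact (Nat.prime_dvd_prime_iff_eq hp Nat.prime_two).1 <| by
        exact_mod_cast hpZ.dvd_of_dvd_pow h4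
    have h' : (p : ℤ) ^ 2 ∣ -t - 2 := by
      rw [show -t - 2 = -(t + 2) by ring, dvd_neg]
      exact hpZ.pow_dvd_of_dvd_mul_left 2 hminus h
    rw [← padicValInt_genFib_of_sq_dvd_sub_two p h' hk]
    simp only [padicValInt, natAbs_genFib_neg]
  · exact padicValInt_genFib_of_sq_dvd_sub_two p (hpZ.pow_dvd_of_dvd_mul_right 2 hplus h) hk

end Valuation

theorem valuation_conj_prime_general (s : ℤ) (hs : 2 ≤ s) (p : ℕ) (hp : p.Prime)
    (hp3 : 3 ≤ p) :
    ∃ s' d' : ℕ, 0 < s' ∧ 0 < d' ∧ d' ≤ p ∧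
      ∀ n : ℕ, 0 < n →
        (¬ d' ∣ n → padicValInt p (genFib s (-1) n) = 0) ∧
        (d' ∣ n → padicValInt p (genFib s (-1) n) = padicValNat p (s' * (n / d'))) := by
  have := Fact.mk hp
  obtain ⟨hd0, hdp, hdvd⟩ := rankOfApparition_spec p (by omega) s
  set d := rankOfApparition s p
  refine ⟨p ^ padicValInt p (genFib s (-1) d), d, pow_pos hp.pos _, hd0, hdp, fun n hn ↦
    ⟨fun hnd ↦ padicValInt.eq_zero_of_not_dvd ((hdvd n).not.2 hnd), ?_⟩⟩
  rintro ⟨k, rfl⟩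
  have hk : k ≠ 0 := right_ne_zero_of_mul hn.ne'
  have hV : (p : ℤ) ^ 2 ∣ lucasV s d ^ 2 - 4 := by
    rw [lucasV_sq_sub_four]
    exact dvd_mul_of_dvd_right (pow_dvd_pow_of_dvd ((hdvd d).2 dvd_rfl) 2) _
  have hprod := genFib_ne_zero s (hs.trans (le_abs_self s)) hn.ne'
  rw [genFib_mul] at hprod ⊢
  rw [padicValInt.mul (left_ne_zero_of_mul hprod) (right_ne_zero_of_mul hprod),
    padicValInt_genFib_of_sq_dvd_sq_sub_four p (by omega) hV hk, Nat.mul_div_cancel_left k hd0,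
    padicValNat.mul (by positivity) hk, padicValNat.prime_pow]

/-- Valuation conjecture of ACMS, case of an odd prime. -/
theorem valuation_conj_prime (s : ℤ) (hs : 2 ≤ s) (p : ℕ) (hp : p.Prime) (hodd : Odd p)
    (hp3 : 3 ≤ p) :
    ∃ s' d' : ℕ, 0 < s' ∧ 0 < d' ∧ d' ≤ p ∧
      ∀ n : ℕ, 0 < n →
        (¬ d' ∣ n → padicValInt p (genFib s (-1) n) = 0) ∧
        (d' ∣ n → padicValInt p (genFib s (-1) n) = padicValNat p (s' * (n / d'))) :=
  valuation_conj_prime_general s hs p hp hp3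
end

section
/- For positive integers r, m, n and arbitrary integers s, t: f_{rn}(s,t)·f_{r(n+m-1)}(s,t) - f_{r(n-1)}(s,t)·f_{r(n+m)}(s,t) = (-t)^{r(n-1)}·f_r(s,t)·f_{rm}(s,t). -/
theorem genFib_two_step (s t : ℤ) (k : ℕ) :
    genFib s t (k + 2) = s * genFib s t (k + 1) + t * genFib s t k := by rw [genFib]

theorem genFib_add (s t : ℤ) : ∀ m n : ℕ,
    genFib s t (m + n + 1) =
      genFib s t (m + 1) * genFib s t (n + 1) + t * genFib s t m * genFib s t n := by
  intro m
  induction m using Nat.twoStepInduction with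
  | zero => intro n; simp [genFib]
  | one =>
    intro n
    have h : 1 + n + 1 = n + 2 := by omega
    rw [h, genFib_two_step]
    simp [genFib]
  | more m ih1 ih2 =>
    intro n
    have h : m + 2 + n + 1 = (m + n + 1) + 2 := by omega
    have h2 : m + n + 1 + 1 = m + 1 + n + 1 := by omega
    have h3 : m + 2 + 1 = m + 1 + 2 := by omega
    have h4 : m + 1 + 1 = m + 2 := rfl
    rw [h, genFib_two_step, h2, ih2 n, ih1 n, h3, genFib_two_step s t (m+1), h4, genFib_two_step s t m]
    ring

theorem genFib_cassini (s t : ℤ) : ∀ b : ℕ,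
    genFib s t (b + 1) ^ 2 - s * genFib s t b * genFib s t (b + 1) - t * genFib s t b ^ 2
      = (-t) ^ b := by
  intro b
  induction b with
  | zero => simp [genFib]
  | succ b ih =>
    rw [genFib_two_step, pow_succ]
    linear_combination (-t) * ih

theorem genFib_docagne (s t : ℤ) (r c b : ℕ) (hr : 0 < r) :
    genFib s t (b + r) * genFib s t (b + c) - genFib s t b * genFib s t (b + r + c)
      = (-t) ^ b * genFib s t r * genFib s t c := by
  obtain ⟨r, rfl⟩ : ∃ r', r = r' + 1 := ⟨r - 1, by omega⟩
  cases b with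
  | zero => simp [genFib]
  | succ b =>
    have hA := genFib_add s t b (r + 1)
    have hB := genFib_add s t b c
    have hC := genFib_add s t b (r + 1 + c)
    have hrc1 := genFib_add s t r c
    have hrc2 := genFib_add s t (r + 1) c
    have hr2 := genFib_two_step s t r
    have hcas := genFib_cassini s t b
    have i1 : b + 1 + (r + 1) = b + (r + 1) + 1 := by omega
    have i2 : b + 1 + c = b + c + 1 := by omega
    have i3 : b + 1 + (r + 1) + c = b + (r + 1 + c) + 1 := by omega
    have i4 : r + 1 + 1 = r + 2 := rfl
    have i5 : r + 1 + c = r + c + 1 := by omega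
    rw [i3, i1, i2, hA, hB, hC, hrc2, i4, i5, hrc1, hr2, pow_succ]
    linear_combination (-(t * genFib s t c * genFib s t (r + 1))) * hcas

/-- f_{rn} f_{r(n+m-1)} - f_{r(n-1)} f_{r(n+m)} = (-t)^{r(n-1)} f_r f_{rm}. -/
theorem fib_identity (s t : ℤ) (r m n : ℕ) (hr : 0 < r) (hm : 0 < m) (hn : 0 < n) :
    genFib s t (r * n) * genFib s t (r * (n + m - 1)) -
        genFib s t (r * (n - 1)) * genFib s t (r * (n + m)) =
      (-t) ^ (r * (n - 1)) * genFib s t r * genFib s t (r * m) := by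
  obtain ⟨n, rfl⟩ : ∃ n', n = n' + 1 := ⟨n - 1, by omega⟩
  obtain ⟨m, rfl⟩ : ∃ m', m = m' + 1 := ⟨m - 1, by omega⟩
  have j1 : n + 1 - 1 = n := by omega
  have j2 : n + 1 + (m + 1) - 1 = n + m + 1 := by omega
  rw [j1, j2]
  have h := genFib_docagne s t r (r * (m + 1)) (r * n) hr
  have e1 : r * n + r = r * (n + 1) := by ring
  have e2 : r * n + r * (m + 1) = r * (n + m + 1) := by ring
  have e3 : r * n + r + r * (m + 1) = r * (n + 1 + (m + 1)) := by ring
  rw [e3, e1, e2] at h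
  exact h
end
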